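/- NHEG symmetry vector fields: on ℝ × (0,∞) × 𝕋^{d-3} with coordinates (t, r, φ¹,…,φ^{d-3}) and a fixed vector k ∈ ℝ^{d-3}, define for each smooth function ε on the torus the vector field χ[ε] = ε k·∂_φ − (k·∂_φ ε) r ∂_r − (k·∂_φ ε)(1/r) ∂_t. Then [χ[ε₁], χ[ε₂]] = χ[ε₁ (k·∂_φ ε₂) − ε₂ (k·∂_φ ε₁)]. In particular, with χ_n = χ[−e^{−i n·φ}] for n ∈ ℤ^{d-3}, i[χ_m, χ_n] = k·(m−n) χ_{m+n}. -/

import Mathlib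

open scoped BigOperators

/-- Lie bracket of vector fields on `ℝ × ℝ × 𝕋^{d-3}` (coordinates `(t,r,φ)` with
`φ` the torus coordinates). -/
noncomputable def lieBE {N : ℕ}
    (X Y : ℝ × ℝ × (Fin N → ℝ) → ℝ × ℝ × (Fin N → ℝ))
    (p : ℝ × ℝ × (Fin N → ℝ)) : ℝ × ℝ × (Fin N → ℝ) :=
  fderiv ℝ Y p (X p) - fderiv ℝ X p (Y p)

/-- Directional derivative `k·∂_φ ε` of a function on the torus along `k`. -/
noncomputable def Dk {N : ℕ} (k : Fin N → ℝ) (ε : (Fin N → ℝ) → ℝ)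
    (φ : Fin N → ℝ) : ℝ :=
  fderiv ℝ ε φ k

/-- The NHEG symmetry vector field
`χ[ε] = ε k·∂_φ − (k·∂_φ ε) r ∂_r − (k·∂_φ ε)(1/r) ∂_t`, components `(t,r,φ)`. -/
noncomputable def chiN {N : ℕ} (k : Fin N → ℝ) (ε : (Fin N → ℝ) → ℝ) :
    ℝ × ℝ × (Fin N → ℝ) → ℝ × ℝ × (Fin N → ℝ) :=
  fun p => (-(Dk k ε p.2.2) / p.2.1, -(Dk k ε p.2.2) * p.2.1, fun i => ε p.2.2 * k i)

/-- Complexified Lie bracket on `ℂ × ℂ × (Fin N → ℂ)`. -/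
noncomputable def lieBEC {N : ℕ}
    (X Y : ℂ × ℂ × (Fin N → ℂ) → ℂ × ℂ × (Fin N → ℂ))
    (p : ℂ × ℂ × (Fin N → ℂ)) : ℂ × ℂ × (Fin N → ℂ) :=
  fderiv ℂ Y p (X p) - fderiv ℂ X p (Y p)

/-- Complexified directional derivative along (the complexification of) `k`. -/
noncomputable def DkC {N : ℕ} (k : Fin N → ℝ) (f : (Fin N → ℂ) → ℂ)
    (φ : Fin N → ℂ) : ℂ :=
  fderiv ℂ f φ (fun i => (k i : ℂ))

/-- Complexified NHEG symmetry vector field. -/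
noncomputable def chiNC {N : ℕ} (k : Fin N → ℝ) (f : (Fin N → ℂ) → ℂ) :
    ℂ × ℂ × (Fin N → ℂ) → ℂ × ℂ × (Fin N → ℂ) :=
  fun p => (-(DkC k f p.2.2) / p.2.1, -(DkC k f p.2.2) * p.2.1,
    fun i => f p.2.2 * (k i : ℂ))

/-- The mode `χ_n = χ[−e^{−i n·φ}]`, `n ∈ ℤ^{d-3}`. -/
noncomputable def chiModeN {N : ℕ} (k : Fin N → ℝ) (n : Fin N → ℤ) :
    ℂ × ℂ × (Fin N → ℂ) → ℂ × ℂ × (Fin N → ℂ) :=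
  chiNC k fun φ => -Complex.exp (-Complex.I * ∑ j, (n j : ℂ) * φ j)

/-- `k·(m−n)` for lattice vectors. -/
noncomputable def kdotZ {N : ℕ} (k : Fin N → ℝ) (m : Fin N → ℤ) : ℝ :=
  ∑ i, k i * (m i : ℝ)

open ContinuousLinearMap

section generic
variable {𝕜 : Type} [NontriviallyNormedField 𝕜] {N : ℕ}

noncomputable def DG (k : Fin N → 𝕜) (ε : (Fin N → 𝕜) → 𝕜) (φ : Fin N → 𝕜) : 𝕜 :=
  fderiv 𝕜 ε φ k

noncomputable def chiG (k : Fin N → 𝕜) (ε : (Fin N → 𝕜) → 𝕜) :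
    𝕜 × 𝕜 × (Fin N → 𝕜) → 𝕜 × 𝕜 × (Fin N → 𝕜) :=
  fun p => (-(DG k ε p.2.2) / p.2.1, -(DG k ε p.2.2) * p.2.1, fun i => ε p.2.2 * k i)

lemma DG_contDiff {k : Fin N → 𝕜} {ε : (Fin N → 𝕜) → 𝕜} (h : ContDiff 𝕜 2 ε) :
    ContDiff 𝕜 1 (DG k ε) :=
  (h.fderiv_right (by norm_num)).clm_apply contDiff_const

lemma fderiv_chiG_apply (k : Fin N → 𝕜) (ε : (Fin N → 𝕜) → 𝕜) (h : ContDiff 𝕜 2 ε)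
    (p : 𝕜 × 𝕜 × (Fin N → 𝕜)) (hr : p.2.1 ≠ 0) (v : 𝕜 × 𝕜 × (Fin N → 𝕜)) :
    fderiv 𝕜 (chiG k ε) p v =
      (-(fderiv 𝕜 (DG k ε) p.2.2 v.2.2) / p.2.1 + DG k ε p.2.2 * v.2.1 / p.2.1 ^ 2,
       -(fderiv 𝕜 (DG k ε) p.2.2 v.2.2) * p.2.1 - DG k ε p.2.2 * v.2.1,
       fun i => fderiv 𝕜 ε p.2.2 v.2.2 * k i) := by
  have hD : DifferentiableAt 𝕜 (DG k ε) p.2.2 :=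
    ((DG_contDiff h).differentiable one_ne_zero).differentiableAt
  have hε : DifferentiableAt 𝕜 ε p.2.2 :=
    (h.differentiable (by norm_num)).differentiableAt
  have hsnd2 : HasFDerivAt (fun q : 𝕜 × 𝕜 × (Fin N → 𝕜) => q.2.2)
      ((ContinuousLinearMap.snd 𝕜 𝕜 (Fin N → 𝕜)).comp
        (ContinuousLinearMap.snd 𝕜 𝕜 (𝕜 × (Fin N → 𝕜)))) p :=
    hasFDerivAt_snd.comp p hasFDerivAt_snd
  have hsnd1 : HasFDerivAt (fun q : 𝕜 × 𝕜 × (Fin N → 𝕜) => q.2.1)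
      ((ContinuousLinearMap.fst 𝕜 𝕜 (Fin N → 𝕜)).comp
        (ContinuousLinearMap.snd 𝕜 𝕜 (𝕜 × (Fin N → 𝕜)))) p :=
    hasFDerivAt_fst.comp p hasFDerivAt_snd
  have hDc : HasFDerivAt (fun q : 𝕜 × 𝕜 × (Fin N → 𝕜) => DG k ε q.2.2) _ p :=
    (hD.hasFDerivAt.comp p hsnd2 :)
  have hεc : HasFDerivAt (fun q : 𝕜 × 𝕜 × (Fin N → 𝕜) => ε q.2.2) _ p :=
    (hε.hasFDerivAt.comp p hsnd2 :)
  have hinv : HasFDerivAt (fun q : 𝕜 × 𝕜 × (Fin N → 𝕜) => (q.2.1)⁻¹) _ p :=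
    ((hasFDerivAt_inv hr).comp p hsnd1 :)
  have h1 := hDc.fun_neg.fun_mul hinv
  have h2 := hDc.fun_neg.fun_mul hsnd1
  have h3 := hεc.smul_const k
  have H := (HasFDerivAt.prodMk h1 (HasFDerivAt.prodMk h2 h3))
  have heq : chiG k ε = fun q : 𝕜 × 𝕜 × (Fin N → 𝕜) =>
      (-(DG k ε q.2.2) * (q.2.1)⁻¹, -(DG k ε q.2.2) * q.2.1, ε q.2.2 • k) := by
    funext q
    simp [chiG, div_eq_mul_inv]
    rfl
  rw [heq, H.fderiv]
  simp [ContinuousLinearMap.prod_apply, ContinuousLinearMap.comp_apply,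
    ContinuousLinearMap.smul_apply, ContinuousLinearMap.add_apply,
    ContinuousLinearMap.sub_apply, ContinuousLinearMap.neg_apply,
    ContinuousLinearMap.smulRight_apply, smul_eq_mul]
  constructor
  · field_simp
    ring
  constructor
  · ring
  · funext i
    simp [Pi.smul_apply, smul_eq_mul]

end generic

section generic2
variable {𝕜 : Type} [NontriviallyNormedField 𝕜] {N : ℕ}

noncomputable def lieG (X Y : 𝕜 × 𝕜 × (Fin N → 𝕜) → 𝕜 × 𝕜 × (Fin N → 𝕜))
    (p : 𝕜 × 𝕜 × (Fin N → 𝕜)) : 𝕜 × 𝕜 × (Fin N → 𝕜) :=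
  fderiv 𝕜 Y p (X p) - fderiv 𝕜 X p (Y p)

lemma key_bracket (k : Fin N → 𝕜) (ε₁ ε₂ : (Fin N → 𝕜) → 𝕜)
    (h₁ : ContDiff 𝕜 2 ε₁) (h₂ : ContDiff 𝕜 2 ε₂)
    (p : 𝕜 × 𝕜 × (Fin N → 𝕜)) (hr : p.2.1 ≠ 0) :
    lieG (chiG k ε₁) (chiG k ε₂) p
      = chiG k (fun φ => ε₁ φ * DG k ε₂ φ - ε₂ φ * DG k ε₁ φ) p := by
  set φ := p.2.2 with hφ
  set r := p.2.1 with hrr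
  have hD₁ : DifferentiableAt 𝕜 (DG k ε₁) φ :=
    ((DG_contDiff h₁).differentiable one_ne_zero).differentiableAt
  have hD₂ : DifferentiableAt 𝕜 (DG k ε₂) φ :=
    ((DG_contDiff h₂).differentiable one_ne_zero).differentiableAt
  have hε₁ : DifferentiableAt 𝕜 ε₁ φ := (h₁.differentiable (by norm_num)).differentiableAt
  have hε₂ : DifferentiableAt 𝕜 ε₂ φ := (h₂.differentiable (by norm_num)).differentiableAt
  set a := DG k ε₁ φ with ha
  set b := DG k ε₂ φ with hb
  set c₁ := fderiv 𝕜 (DG k ε₁) φ k with hc₁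
  set c₂ := fderiv 𝕜 (DG k ε₂) φ k with hc₂
  -- the value of D on the bracket function
  have hDval : DG k (fun ψ => ε₁ ψ * DG k ε₂ ψ - ε₂ ψ * DG k ε₁ ψ) φ
      = ε₁ φ * c₂ - ε₂ φ * c₁ := by
    rw [DG, fderiv_fun_sub ((hε₁.fun_mul hD₂)) ((hε₂.fun_mul hD₁)), ContinuousLinearMap.sub_apply,
      fderiv_fun_mul hε₁ hD₂, fderiv_fun_mul hε₂ hD₁]
    simp only [ContinuousLinearMap.add_apply, ContinuousLinearMap.smul_apply, smul_eq_mul]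
    rw [show fderiv 𝕜 ε₁ φ k = a from rfl, show fderiv 𝕜 ε₂ φ k = b from rfl, ← hc₁, ← hc₂]
    ring
  -- the vector fields evaluated at p
  have hX : chiG k ε₁ p = (-a / r, -a * r, fun i => ε₁ φ * k i) := rfl
  have hY : chiG k ε₂ p = (-b / r, -b * r, fun i => ε₂ φ * k i) := rfl
  have keyed : ∀ (ε : (Fin N → 𝕜) → 𝕜), DifferentiableAt 𝕜 (DG k ε) φ →
      ∀ c : 𝕜, fderiv 𝕜 (DG k ε) φ (fun i => c * k i)
        = c * fderiv 𝕜 (DG k ε) φ k := by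
    intro ε hDε c
    have : (fun i => c * k i) = c • k := by funext i; simp [Pi.smul_apply]
    rw [this, (fderiv 𝕜 (DG k ε) φ).map_smul, smul_eq_mul]
  have keyed' : ∀ (ε : (Fin N → 𝕜) → 𝕜), ∀ c : 𝕜, fderiv 𝕜 ε φ (fun i => c * k i)
      = c * fderiv 𝕜 ε φ k := by
    intro ε c
    have : (fun i => c * k i) = c • k := by funext i; simp [Pi.smul_apply]
    rw [this, (fderiv 𝕜 ε φ).map_smul, smul_eq_mul]
  rw [lieG, fderiv_chiG_apply k ε₂ h₂ p hr, fderiv_chiG_apply k ε₁ h₁ p hr, hX, hY]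
  rw [chiG, hDval]
  simp only [← hφ, ← hrr, ← ha, ← hb]
  rw [keyed ε₂ hD₂, keyed ε₁ hD₁, keyed' ε₂, keyed' ε₁,
    show fderiv 𝕜 ε₁ φ k = a from rfl, show fderiv 𝕜 ε₂ φ k = b from rfl, ← hc₁, ← hc₂]
  refine Prod.ext ?_ (Prod.ext ?_ ?_)
  · show (_ : 𝕜) - _ = _
    field_simp
    ring
  · show (_ : 𝕜) - _ = _
    ring
  · funext i
    show (_ : 𝕜) - _ = _
    ring

end generic2

section cplx
variable {N : ℕ}

noncomputable def modeF (n : Fin N → ℤ) : (Fin N → ℂ) → ℂ :=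
  fun φ => -Complex.exp (-Complex.I * ∑ j, (n j : ℂ) * φ j)

noncomputable def SL (n : Fin N → ℤ) : (Fin N → ℂ) →L[ℂ] ℂ :=
  ∑ j, (n j : ℂ) • ContinuousLinearMap.proj j

lemma SL_apply (n : Fin N → ℤ) (φ : Fin N → ℂ) : SL n φ = ∑ j, (n j : ℂ) * φ j := by
  simp [SL, ContinuousLinearMap.sum_apply, ContinuousLinearMap.smul_apply]

lemma SL_fun (n : Fin N → ℤ) : (fun φ : Fin N → ℂ => ∑ j, (n j : ℂ) * φ j) = ⇑(SL n) := by
  funext φ; rw [SL_apply]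

lemma modeF_contDiff (n : Fin N → ℤ) : ContDiff ℂ 2 (modeF n) := by
  have h : ContDiff ℂ 2 (fun φ : Fin N → ℂ => -Complex.I * SL n φ) :=
    contDiff_const.mul (SL n).contDiff
  have h2 := (Complex.contDiff_exp.comp h).neg
  unfold modeF
  simpa only [Function.comp, SL_apply] using h2

lemma modeF_hasFDerivAt (n : Fin N → ℤ) (φ : Fin N → ℂ) :
    HasFDerivAt (modeF n)
      (-(Complex.exp (-Complex.I * ∑ j, (n j : ℂ) * φ j) •
        ((-Complex.I) • SL n))) φ := by
  have hS : HasFDerivAt (fun ψ : Fin N → ℂ => ∑ j, (n j : ℂ) * ψ j) (SL n) φ := by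
    rw [SL_fun]; exact (SL n).hasFDerivAt
  have h1 := hS.const_mul (-Complex.I)
  have h2 := h1.cexp
  exact h2.neg

lemma Dmode (k : Fin N → ℝ) (n : Fin N → ℤ) (φ : Fin N → ℂ) :
    DG (fun i => (k i : ℂ)) (modeF n) φ
      = (-Complex.I * ∑ j, (n j : ℂ) * (k j : ℂ)) * modeF n φ := by
  rw [DG, (modeF_hasFDerivAt n φ).fderiv]
  simp only [ContinuousLinearMap.neg_apply, ContinuousLinearMap.smul_apply, SL_apply,
    smul_eq_mul, modeF]
  ring

lemma modeF_mul (m n : Fin N → ℤ) (φ : Fin N → ℂ) :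
    modeF m φ * modeF n φ = -modeF (m + n) φ := by
  simp only [modeF, neg_mul_neg, neg_neg, ← Complex.exp_add]
  congr 1
  rw [← mul_add, ← Finset.sum_add_distrib]
  congr 1
  refine Finset.sum_congr rfl fun j _ => ?_
  push_cast [Pi.add_apply]
  ring

lemma chiG_smul {𝕜 : Type} [NontriviallyNormedField 𝕜] (k : Fin N → 𝕜) (c : 𝕜)
    (f : (Fin N → 𝕜) → 𝕜) (p : 𝕜 × 𝕜 × (Fin N → 𝕜)) (hf : DifferentiableAt 𝕜 f p.2.2) :
    chiG k (fun ψ => c * f ψ) p = c • chiG k f p := by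
  have hD : DG k (fun ψ => c * f ψ) p.2.2 = c * DG k f p.2.2 := by
    rw [DG, DG, fderiv_const_mul hf c]; simp
  refine Prod.ext ?_ (Prod.ext ?_ ?_)
  · show -(DG k (fun ψ => c * f ψ) p.2.2) / p.2.1 = c * (-(DG k f p.2.2) / p.2.1)
    rw [hD]; ring
  · show -(DG k (fun ψ => c * f ψ) p.2.2) * p.2.1 = c * (-(DG k f p.2.2) * p.2.1)
    rw [hD]; ring
  · funext i
    show c * f p.2.2 * k i = c * (f p.2.2 * k i)
    ring

end cplx

/-- NHEG symmetry vector fields: for smooth functions `ε` on the torus, the vector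
fields `χ[ε] = ε k·∂_φ − (k·∂_φ ε) r ∂_r − (k·∂_φ ε)(1/r) ∂_t` satisfy
`[χ[ε₁], χ[ε₂]] = χ[ε₁ (k·∂_φ ε₂) − ε₂ (k·∂_φ ε₁)]`; in particular, for the
complexified modes `χ_n = χ[−e^{−i n·φ}]`, `i[χ_m, χ_n] = k·(m−n) χ_{m+n}`. -/
theorem nheg_symmetry_vector_fields {N : ℕ} (k : Fin N → ℝ) :
    (∀ ε₁ ε₂ : (Fin N → ℝ) → ℝ, ContDiff ℝ (⊤ : ℕ∞) ε₁ → ContDiff ℝ (⊤ : ℕ∞) ε₂ →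
      (∀ (i : Fin N) (v : Fin N → ℝ),
        ε₁ (Function.update v i (v i + 2 * Real.pi)) = ε₁ v) →
      (∀ (i : Fin N) (v : Fin N → ℝ),
        ε₂ (Function.update v i (v i + 2 * Real.pi)) = ε₂ v) →
      ∀ p : ℝ × ℝ × (Fin N → ℝ), p.2.1 ≠ 0 →
        lieBE (chiN k ε₁) (chiN k ε₂) p
          = chiN k (fun φ => ε₁ φ * Dk k ε₂ φ - ε₂ φ * Dk k ε₁ φ) p) ∧
    (∀ m n : Fin N → ℤ, ∀ p : ℂ × ℂ × (Fin N → ℂ), p.2.1 ≠ 0 →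
      Complex.I • lieBEC (chiModeN k m) (chiModeN k n) p
        = ((kdotZ k (m - n) : ℝ) : ℂ) • chiModeN k (m + n) p) := by
  constructor
  · intro ε₁ ε₂ h₁ h₂ _ _ p hp
    exact key_bracket k ε₁ ε₂ (h₁.of_le (by exact WithTop.coe_le_coe.mpr (le_top : (2 : ℕ∞) ≤ ⊤))) (h₂.of_le (by exact WithTop.coe_le_coe.mpr (le_top : (2 : ℕ∞) ≤ ⊤))) p hp
  · intro m n p hp
    set kC : Fin N → ℂ := fun i => (k i : ℂ) with hkC
    have hmn : DifferentiableAt ℂ (modeF (m + n)) p.2.2 :=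
      ((modeF_contDiff (m + n)).differentiable (by norm_num)).differentiableAt
    have hL : lieBEC (chiModeN k m) (chiModeN k n) p
        = chiG kC (fun φ => modeF m φ * DG kC (modeF n) φ
            - modeF n φ * DG kC (modeF m) φ) p :=
      key_bracket kC (modeF m) (modeF n) (modeF_contDiff m) (modeF_contDiff n) p hp
    rw [hL]
    have hfun : (fun φ => modeF m φ * DG kC (modeF n) φ - modeF n φ * DG kC (modeF m) φ)
        = fun φ => (-Complex.I * ∑ j, ((m j : ℂ) - (n j : ℂ)) * (k j : ℂ))
            * modeF (m + n) φ := by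
      funext φ
      rw [Dmode, Dmode]
      have hprod := modeF_mul m n φ
      have hAB : ∑ j, ((m j : ℂ) - (n j : ℂ)) * (k j : ℂ)
          = (∑ j, (m j : ℂ) * (k j : ℂ)) - ∑ j, (n j : ℂ) * (k j : ℂ) := by
        rw [← Finset.sum_sub_distrib]
        exact Finset.sum_congr rfl fun j _ => by ring
      rw [hAB]
      set A := ∑ j, (m j : ℂ) * (k j : ℂ)
      set B := ∑ j, (n j : ℂ) * (k j : ℂ)
      linear_combination (Complex.I * A - Complex.I * B) * hprod
    rw [hfun, chiG_smul kC _ (modeF (m + n)) p hmn, smul_smul]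
    have hI : ∀ s : ℂ, Complex.I * (-Complex.I * s) = s := fun s => by
      rw [neg_mul, mul_neg, ← mul_assoc, Complex.I_mul_I]; ring
    rw [hI]
    have hs : (∑ j, ((m j : ℂ) - (n j : ℂ)) * (k j : ℂ))
        = ((kdotZ k (m - n) : ℝ) : ℂ) := by
      rw [kdotZ]
      push_cast [Pi.sub_apply]
      exact Finset.sum_congr rfl fun j _ => by ring
    rw [hs]
    rfl
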